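/- arXiv:2512.10614 — 4 statements merged into one kernel-verified Lean document; each statement's English description precedes it below -/
import Mathlib

section
/- In a Simple Clock Auction against a straightforward bidder, for every demand sequence (k^n) of the player there exists a round N at which the auction terminates, i.e. k^N_j + D_j(p^N) ≤ m_j for all j ∈ [M], where (p^n) is the induced price sequence. -/
open Finset Set

/-- Bundles of items: component `j` ranges over `{0, …, m j}`. -/
abbrev Bundle {M : ℕ} (m : Fin M → ℕ) := ∀ j, Fin (m j + 1)

/-- Quasi-linear payoff `v(δ) − ⟨δ, p⟩`. -/
def payoff {M : ℕ} {m : Fin M → ℕ} (v : Bundle m → ℝ) (δ : Bundle m) (p : Fin M → ℝ) : ℝ :=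
  v δ - ∑ j, (δ j : ℝ) * p j

/-!
Prices never fall, so they stay nonnegative. Once `p_j` exceeds `max v`, every bundle demanding
an item of category `j` has negative payoff while the empty bundle has payoff `0`, so the bidder
demands nothing of `j`; as the player never demands more than `m_j`, category `j` is then not
over-demanded and its price freezes. Hence every price is bounded. In a round without termination
some price rises by at least `min ε`, so the total price would grow without bound.
-/

theorem payoff_le_sub_mul_price {M : ℕ} {m : Fin M → ℕ} (v : Bundle m → ℝ) (δ : Bundle m)
    {p : Fin M → ℝ} (hp : ∀ i, 0 ≤ p i) (j : Fin M) :
    payoff v δ p ≤ v δ - (δ j : ℝ) * p j := by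
  have : (δ j : ℝ) * p j ≤ ∑ i, (δ i : ℝ) * p i :=
    Finset.single_le_sum (f := fun i => (δ i : ℝ) * p i)
      (fun i _ => mul_nonneg (Nat.cast_nonneg _) (hp i)) (Finset.mem_univ j)
  unfold payoff
  linarith

theorem demand_eq_zero_of_value_lt_price {M : ℕ} {m : Fin M → ℕ} {v : Bundle m → ℝ}
    (hv0 : v (fun _ => 0) = 0) {p : Fin M → ℝ} (hp : ∀ i, 0 ≤ p i) {d : Bundle m}
    (hopt : payoff v (fun _ => 0) p ≤ payoff v d p) {j : Fin M} (hlt : v d < p j) :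
    (d j : ℕ) = 0 := by
  by_contra hd
  have hd1 : (1 : ℝ) ≤ (d j : ℕ) := by exact_mod_cast Nat.one_le_iff_ne_zero.mpr hd
  have hzero : payoff v (fun _ => 0) p = 0 := by simp [payoff, hv0]
  have hprice : p j ≤ (d j : ℕ) * p j := le_mul_of_one_le_left (hp j) hd1
  linarith [payoff_le_sub_mul_price v d hp j]

theorem le_max_of_forall_le_of_step {x : ℕ → ℝ} {c : ℕ → Prop} [DecidablePred c] {a V : ℝ}
    (hstep : ∀ n, x (n + 1) = x n + if c n then a else 0) (hc : ∀ n, c n → x n ≤ V) (n : ℕ) :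
    x n ≤ max (x 0) (V + a) := by
  induction n with
  | zero => exact le_max_left _ _
  | succ n ih =>
    rw [hstep]
    split_ifs with h
    · linarith [hc n h, le_max_right (x 0) (V + a)]
    · simpa using ih

theorem exists_forall_not_of_step_of_bounded {ι : Type*} [Fintype ι] {x : ℕ → ι → ℝ}
    {c : ℕ → ι → Prop} [∀ n j, Decidable (c n j)] {ε : ι → ℝ} (hε : ∀ j, 0 < ε j)
    (hstep : ∀ n j, x (n + 1) j = x n j + if c n j then ε j else 0)
    {B : ι → ℝ} (hB : ∀ n j, x n j ≤ B j) :
    ∃ n, ∀ j, ¬ c n j := by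
  by_contra! hc
  have : Nonempty ι := ⟨(hc 0).choose⟩
  obtain ⟨j₀, hj₀⟩ := Finite.exists_min ε
  have hgrow : ∀ n : ℕ, ∑ j, x 0 j + n * ε j₀ ≤ ∑ j, x n j := by
    intro n
    induction n with
    | zero => simp
    | succ n ih =>
      obtain ⟨j, hj⟩ := hc n
      have hinc : ε j ≤ ∑ i, (if c n i then ε i else 0) := by
        simpa [hj] using Finset.single_le_sum (f := fun i => if c n i then ε i else 0)
          (fun i _ => by split_ifs <;> linarith [hε i]) (Finset.mem_univ j)
      simp only [hstep, Finset.sum_add_distrib]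
      push_cast
      linarith [hj₀ j]
  obtain ⟨n, hn⟩ := exists_nat_gt ((∑ j, B j - ∑ j, x 0 j) / ε j₀)
  rw [div_lt_iff₀ (hε j₀)] at hn
  linarith [hgrow n, Finset.sum_le_sum fun j (_ : j ∈ Finset.univ) => hB n j]

theorem stmt2_general {M : ℕ} (m : Fin M → ℕ)
    (v : Bundle m → ℝ)
    (hv0 : v (fun _ => 0) = 0)
    (pmin : Fin M → ℝ) (hpmin : ∀ j, 0 ≤ pmin j)
    (ε : Fin M → ℝ) (hε : ∀ j, 0 < ε j)
    (D : (Fin M → ℝ) → Bundle m)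
    (k : ℕ → Bundle m)
    (p : ℕ → Fin M → ℝ)
    (hp0 : p 0 = pmin)
    (hstep : ∀ n j, p (n + 1) j =
      p n j + (if m j < (k n j : ℕ) + (D (p n) j : ℕ) then ε j else 0))
    (hD : ∀ n d, d ≠ D (p n) → payoff v d (p n) < payoff v (D (p n)) (p n)) :
    ∃ N, ∀ j, (k N j : ℕ) + (D (p N) j : ℕ) ≤ m j := by
  obtain ⟨δmax, hδmax⟩ := Finite.exists_max v
  have hp_nonneg : ∀ n j, 0 ≤ p n j := by
    intro n
    induction n with
    | zero => simpa [hp0] using hpmin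
    | succ n ih =>
      intro j
      rw [hstep]
      split_ifs <;> linarith [ih j, hε j]
  have hempty_le : ∀ n, payoff v (fun _ => 0) (p n) ≤ payoff v (D (p n)) (p n) := fun n => by
    by_cases h : (fun _ => 0) = D (p n)
    · rw [h]
    · exact (hD n _ h).le
  have hover_le : ∀ n j, m j < (k n j : ℕ) + (D (p n) j : ℕ) → p n j ≤ v δmax := by
    intro n j hover
    by_contra! hlt
    have := demand_eq_zero_of_value_lt_price hv0 (hp_nonneg n) (hempty_le n)
      ((hδmax _).trans_lt hlt)
    have := (k n j).is_le
    omega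
  obtain ⟨N, hN⟩ := exists_forall_not_of_step_of_bounded hε hstep
    fun n j => le_max_of_forall_le_of_step (hstep · j) (hover_le · j) n
  exact ⟨N, fun j => not_lt.mp (hN j)⟩

/-- auction termination: for every demand sequence `k` of the player,
with prices following the SCA update against a straightforward bidder with demand `D`,
there is a round `N` with `k^N_j + D_j(p^N) ≤ m_j` for all `j`. -/
theorem stmt2 {M : ℕ} (m : Fin M → ℕ) (hm : ∀ j, 0 < m j)
    (v : Bundle m → ℝ)
    (hv0 : v (fun _ => 0) = 0) (hvnn : ∀ δ, 0 ≤ v δ)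
    (hvmono : ∀ δ δ' : Bundle m, (∀ j, (δ j : ℕ) ≤ (δ' j : ℕ)) → v δ ≤ v δ')
    (pmin : Fin M → ℝ) (hpmin : ∀ j, 0 ≤ pmin j)
    (ε : Fin M → ℝ) (hε : ∀ j, 0 < ε j)
    (D : (Fin M → ℝ) → Bundle m)
    (k : ℕ → Bundle m)
    (p : ℕ → Fin M → ℝ)
    (hp0 : p 0 = pmin)
    (hstep : ∀ n j, p (n + 1) j =
      p n j + (if m j < (k n j : ℕ) + (D (p n) j : ℕ) then ε j else 0))
    (hD : ∀ n d, d ≠ D (p n) → payoff v d (p n) < payoff v (D (p n)) (p n)) :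
    ∃ N, ∀ j, (k N j : ℕ) + (D (p N) j : ℕ) ≤ m j :=
  stmt2_general m v hv0 pmin hpmin ε hε D k p hp0 hstep hD
end

section
/- Suppose the goods are substitutes for the opponent: for all p, p̂ off the indifference locus, if p̂_i ≥ p_i for all i ≠ j and p̂_j = p_j, then D_j(p̂) ≥ D_j(p). Then for any two grid prices p, p̂ ∈ G with p̂ ≥ p componentwise and any bundle k ∈ M, the updated prices satisfy T(k, p̂, ε) ≥ T(k, p, ε) componentwise. -/
open Finset Set

/-- The indifference locus: prices where the demand set is not a singleton. -/
def indiff {M : ℕ} {m : Fin M → ℕ} (v : Bundle m → ℝ) : Set (Fin M → ℝ) :=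
  {p | ∃ δ δ' : Bundle m, δ ≠ δ' ∧ (∀ d, payoff v d p ≤ payoff v δ p) ∧
    (∀ d, payoff v d p ≤ payoff v δ' p)}

/-- The SCA price update. -/
def Tup {M : ℕ} {m : Fin M → ℕ} (D : (Fin M → ℝ) → Bundle m) (ε : Fin M → ℝ)
    (k : Bundle m) (p : Fin M → ℝ) : Fin M → ℝ :=
  fun j => p j + (if m j < (k j : ℕ) + (D p j : ℕ) then ε j else 0)

/-- under the substitutes condition, the price update `T(k, ·, ε)` is
monotone on the grid `G`. -/
theorem stmt3 {M : ℕ} (m : Fin M → ℕ) (v : Bundle m → ℝ)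
    (pmin : Fin M → ℝ) (hpmin : ∀ j, 0 ≤ pmin j)
    (ε : Fin M → ℝ) (hε : ∀ j, 0 < ε j)
    (G : Set (Fin M → ℝ))
    (hG : G = {p | ∀ j, ∃ n : ℕ, p j = pmin j + n * ε j})
    (hGT : ∀ p ∈ G, p ∉ indiff v)
    (D : (Fin M → ℝ) → Bundle m)
    (hD : ∀ p, p ∉ indiff v → ∀ d, payoff v d p ≤ payoff v (D p) p)
    (hsub : ∀ (j : Fin M) (p phat : Fin M → ℝ),
      (∀ i, 0 ≤ p i) → (∀ i, 0 ≤ phat i) →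
      p ∉ indiff v → phat ∉ indiff v →
      (∀ i, i ≠ j → p i ≤ phat i) → phat j = p j →
      (D p j : ℕ) ≤ (D phat j : ℕ)) :
    ∀ (k : Bundle m), ∀ p ∈ G, ∀ phat ∈ G, (∀ j, p j ≤ phat j) →
      ∀ j, Tup D ε k p j ≤ Tup D ε k phat j := by
  intro k p hp phat hphat hle j
  have hp0 : ∀ i, 0 ≤ p i := by
    intro i
    obtain ⟨n, hn⟩ := (hG ▸ hp) i
    rw [hn]
    have := hpmin i; have := (hε i).le
    positivity
  have hphat0 : ∀ i, 0 ≤ phat i := by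
    intro i
    obtain ⟨n, hn⟩ := (hG ▸ hphat) i
    rw [hn]
    have := hpmin i; have := (hε i).le
    positivity
  simp only [Tup]
  by_cases h2 : m j < (k j : ℕ) + (D phat j : ℕ)
  · rw [if_pos h2]
    by_cases h1 : m j < (k j : ℕ) + (D p j : ℕ)
    · rw [if_pos h1]; linarith [hle j]
    · rw [if_neg h1]; linarith [hle j, (hε j).le]
  · rw [if_neg h2]
    by_cases h1 : m j < (k j : ℕ) + (D p j : ℕ)
    · rw [if_pos h1]
      rcases eq_or_lt_of_le (hle j) with heq | hlt
      · exfalso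
        have := hsub j p phat hp0 hphat0 (hGT p hp) (hGT phat hphat)
          (fun i _ => hle i) heq.symm
        omega
      · obtain ⟨n, hn⟩ := (hG ▸ hp) j
        obtain ⟨n', hn'⟩ := (hG ▸ hphat) j
        rw [hn, hn'] at hlt ⊢
        have hnn' : n < n' := by
          by_contra hc
          push_neg at hc
          have : (n' : ℝ) ≤ n := by exact_mod_cast hc
          nlinarith [hε j]
        have h1n : (n : ℝ) + 1 ≤ n' := by exact_mod_cast hnn'
        nlinarith [hε j]
    · rw [if_neg h1]; linarith [hle j]
end

section
/- Under the ordinary substitutes condition for the opponent, the constant-bid payoff is antitone in the price: for all k ∈ M and all grid prices p, p̂ ∈ G with p̂ ≥ p, V(k, p̂) ≤ V(k, p), where V(k,p) is the payoff obtained by bidding the constant bundle k until termination, i.e. V(k,p) = w(k) − ⟨k, p⟩ if k_j + D_j(p) ≤ m_j for all j, and V(k,p) = V(k, T(k,p,ε)) otherwise. -/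
/-!
Running the auction from `q` only raises `q` until the opponent's demand clears, so it suffices to
compare a clearing price `q` with a grid price `p ≤ q`. The run started at `p` then never overtakes
`q`: a coordinate with `p j < q j` has room for a full grid step, and a coordinate with
`p j = q j` is not raised, since by the substitutes condition `D p j ≤ D q j` and item `j` clears
at `q`. When the run from `p` clears, its price is still below `q`, and `w k - ⟨k, ·⟩` is antitone.
The auction terminates because an item is overdemanded only while its price is below the
opponent's largest valuation.
-/

open Finset Set

theorem antitoneOn_of_recursion {α β : Type*} [Preorder α] [Preorder β] {S : Set α}
    {T : α → α} {halt : α → Prop} {g V : α → β} (φ : α → ℕ) (hg : Antitone g)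
    (hVhalt : ∀ p, halt p → V p = g p) (hVstep : ∀ p, ¬ halt p → V p = V (T p))
    (hTS : ∀ p ∈ S, T p ∈ S) (hT : ∀ p, p ≤ T p) (hφ : ∀ p ∈ S, ¬ halt p → φ (T p) < φ p)
    (hTq : ∀ p ∈ S, ∀ q ∈ S, halt q → p ≤ q → T p ≤ q) :
    AntitoneOn V S := by
  have of_halt : ∀ q ∈ S, halt q → ∀ p ∈ S, p ≤ q → V q ≤ V p := by
    intro q hq hhalt p hp hpq
    induction h : φ p using Nat.strong_induction_on generalizing p with
    | _ n ih =>
      by_cases hp' : halt p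
      · rw [hVhalt p hp', hVhalt q hhalt]
        exact hg hpq
      · rw [hVstep p hp']
        exact ih _ (h ▸ hφ p hp hp') _ (hTS p hp) (hTq p hp q hq hhalt hpq) rfl
  intro p hp q hq hpq
  induction h : φ q using Nat.strong_induction_on generalizing q with
  | _ n ih =>
    by_cases hq' : halt q
    · exact of_halt q hq hq' p hp hpq
    · rw [hVstep q hq']
      exact ih _ (h ▸ hφ q hq hq') (hTS q hq) (hpq.trans (hT q)) rfl

theorem ceil_div_sub_add_lt {B x e : ℝ} (he : 0 < e) (hx : x < B) :
    ⌈(B - (x + e)) / e⌉₊ < ⌈(B - x) / e⌉₊ := by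
  have hpos : 0 < ⌈(B - x) / e⌉₊ := Nat.ceil_pos.2 (div_pos (sub_pos.2 hx) he)
  rw [show (B - (x + e)) / e = (B - x) / e - 1 by field_simp; ring, Nat.ceil_sub_one]
  omega

variable {M : ℕ} {m : Fin M → ℕ}

theorem payoff_antitone (v : Bundle m → ℝ) (δ : Bundle m) : Antitone (payoff v δ) :=
  fun _ _ hpq => sub_le_sub_left (sum_le_sum fun j _ =>
    mul_le_mul_of_nonneg_left (hpq j) (Nat.cast_nonneg _)) _

theorem price_lt_value {v : Bundle m → ℝ} {δ : Bundle m} {p : Fin M → ℝ} (hp : 0 ≤ p)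
    (hδ : 0 < payoff v δ p) {j : Fin M} (hj : 0 < (δ j : ℕ)) : p j < v δ := by
  unfold payoff at hδ
  calc p j ≤ (δ j : ℝ) * p j := le_mul_of_one_le_left (hp j) (by exact_mod_cast hj)
    _ ≤ ∑ i, (δ i : ℝ) * p i :=
      single_le_sum (f := fun i => (δ i : ℝ) * p i)
        (fun i _ => mul_nonneg (Nat.cast_nonneg _) (hp i)) (mem_univ j)
    _ < v δ := by linarith

theorem price_lt_value_of_overdemanded {v : Bundle m → ℝ} (hv0 : v 0 = 0)
    {D : (Fin M → ℝ) → Bundle m} {k : Bundle m} {p : Fin M → ℝ} (hp : 0 ≤ p)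
    (hD : ∀ d, d ≠ D p → payoff v d p < payoff v (D p) p) {j : Fin M}
    (hj : m j < (k j : ℕ) + (D p j : ℕ)) : p j < v (D p) := by
  have hDj : 0 < (D p j : ℕ) := by have := (k j).is_le; omega
  have hD0 : (0 : Bundle m) ≠ D p := fun h => by simp [← h] at hDj
  have hpayoff0 : payoff v 0 p = 0 := by simp [payoff, hv0]
  exact price_lt_value hp (hpayoff0 ▸ hD 0 hD0) hDj

def Clears (D : (Fin M → ℝ) → Bundle m) (k : Bundle m) (p : Fin M → ℝ) : Prop :=
  ∀ j, (k j : ℕ) + (D p j : ℕ) ≤ m j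

def grid (pmin ε : Fin M → ℝ) : Set (Fin M → ℝ) :=
  {p | ∀ j, ∃ n : ℕ, p j = pmin j + n * ε j}

theorem nonneg_of_mem_grid {pmin ε p : Fin M → ℝ} (hpmin : 0 ≤ pmin) (hε : 0 ≤ ε)
    (hp : p ∈ grid pmin ε) : 0 ≤ p := fun j => by
  obtain ⟨n, hn⟩ := hp j
  rw [hn]
  exact add_nonneg (hpmin j) (mul_nonneg n.cast_nonneg (hε j))

theorem add_le_of_lt_of_mem_grid {pmin ε p q : Fin M → ℝ} (hε : 0 ≤ ε)
    (hp : p ∈ grid pmin ε) (hq : q ∈ grid pmin ε) {j : Fin M} (h : p j < q j) :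
    p j + ε j ≤ q j := by
  obtain ⟨n, hn⟩ := hp j
  obtain ⟨n', hn'⟩ := hq j
  rw [hn, hn'] at h ⊢
  have hlt : (n : ℝ) < n' := lt_of_mul_lt_mul_right (by linarith) (hε j)
  have hstep : ((n : ℝ) + 1) * ε j ≤ n' * ε j :=
    mul_le_mul_of_nonneg_right (by exact_mod_cast Nat.cast_lt.1 hlt) (hε j)
  linarith

section Tup

variable {D : (Fin M → ℝ) → Bundle m} {ε : Fin M → ℝ} {k : Bundle m} {p : Fin M → ℝ}

theorem le_Tup (hε : 0 ≤ ε) : p ≤ Tup D ε k p := fun j =>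
  le_add_of_nonneg_right (by split_ifs; exacts [hε j, le_rfl])

theorem Tup_mem_grid {pmin : Fin M → ℝ} (hp : p ∈ grid pmin ε) :
    Tup D ε k p ∈ grid pmin ε := by
  intro j
  obtain ⟨n, hn⟩ := hp j
  by_cases h : m j < (k j : ℕ) + (D p j : ℕ)
  · exact ⟨n + 1, by simp only [Tup, if_pos h, hn]; push_cast; ring⟩
  · exact ⟨n, by simp only [Tup, if_neg h, hn, add_zero]⟩

theorem Tup_le_of_clears {q : Fin M → ℝ} (hq : Clears D k q) (hpq : p ≤ q)
    (hgap : ∀ j, p j < q j → p j + ε j ≤ q j)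
    (hsub : ∀ j, p j = q j → (D p j : ℕ) ≤ D q j) : Tup D ε k p ≤ q := by
  intro j
  simp only [Tup]
  split_ifs with h
  · rcases (hpq j).lt_or_eq with hlt | heq
    · exact hgap j hlt
    · exact absurd (hq j) (by have := hsub j heq; omega)
  · simpa using hpq j

noncomputable def stepsLeft (B : ℝ) (ε p : Fin M → ℝ) : ℕ :=
  ∑ j, ⌈(B - p j) / ε j⌉₊

theorem stepsLeft_Tup_lt {B : ℝ} (hε : ∀ j, 0 < ε j)
    (hB : ∀ j, m j < (k j : ℕ) + (D p j : ℕ) → p j < B) (hp : ¬ Clears D k p) :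
    stepsLeft B ε (Tup D ε k p) < stepsLeft B ε p := by
  obtain ⟨j, hj⟩ : ∃ j, m j < (k j : ℕ) + (D p j : ℕ) := by
    simpa [Clears] using hp
  refine sum_lt_sum (fun i _ => Nat.ceil_mono ?_) ⟨j, mem_univ j, ?_⟩
  · exact div_le_div_of_nonneg_right (sub_le_sub_left (le_Tup (fun i => (hε i).le) i) B)
      (hε i).le
  · simp only [Tup, if_pos hj]
    exact ceil_div_sub_add_lt (hε j) (hB j hj)

end Tup

theorem stmt4_general {M : ℕ} (m : Fin M → ℕ)
    (v : Bundle m → ℝ)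
    (hv0 : v (fun _ => 0) = 0)
    (pmin : Fin M → ℝ) (hpmin : ∀ j, 0 ≤ pmin j)
    (ε : Fin M → ℝ) (hε : ∀ j, 0 < ε j)
    (G : Set (Fin M → ℝ))
    (hG : G = {p | ∀ j, ∃ n : ℕ, p j = pmin j + n * ε j})
    (hGT : ∀ p ∈ G, p ∉ indiff v)
    (D : (Fin M → ℝ) → Bundle m)
    (hD : ∀ p ∈ G, ∀ d, d ≠ D p → payoff v d p < payoff v (D p) p)
    (hsub : ∀ (j : Fin M) (p phat : Fin M → ℝ),
      (∀ i, 0 ≤ p i) → (∀ i, 0 ≤ phat i) →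
      p ∉ indiff v → phat ∉ indiff v →
      (∀ i, i ≠ j → p i ≤ phat i) → phat j = p j →
      (D p j : ℕ) ≤ (D phat j : ℕ))
    (w : Bundle m → ℝ)
    (V : Bundle m → (Fin M → ℝ) → ℝ)
    (hVterm : ∀ k p, (∀ j, (k j : ℕ) + (D p j : ℕ) ≤ m j) →
      V k p = w k - ∑ j, (k j : ℝ) * p j)
    (hVstep : ∀ k p, ¬ (∀ j, (k j : ℕ) + (D p j : ℕ) ≤ m j) →
      V k p = V k (Tup D ε k p)) :
    ∀ (k : Bundle m), ∀ p ∈ G, ∀ phat ∈ G, (∀ j, p j ≤ phat j) →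
      V k phat ≤ V k p := by
  intro k
  subst hG
  show AntitoneOn (V k) (grid pmin ε)
  obtain ⟨δmax, hδmax⟩ := Finite.exists_max v
  have hε0 : 0 ≤ ε := fun j => (hε j).le
  have hnonneg : ∀ p ∈ grid pmin ε, 0 ≤ p := fun p hp => nonneg_of_mem_grid hpmin hε0 hp
  refine antitoneOn_of_recursion (halt := Clears D k) (stepsLeft (v δmax) ε)
    (payoff_antitone w k)
    (hVterm k) (hVstep k) (fun p hp => Tup_mem_grid hp) (fun p => le_Tup hε0) ?_ ?_
  · exact fun p hp hhalt => stepsLeft_Tup_lt hε (fun j hj =>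
      (price_lt_value_of_overdemanded hv0 (hnonneg p hp) (hD p hp) hj).trans_le (hδmax _)) hhalt
  · exact fun p hp q hq hhalt hpq => Tup_le_of_clears hhalt hpq
      (fun j => add_le_of_lt_of_mem_grid hε0 hp hq)
      (fun j hj => hsub j p q (hnonneg p hp) (hnonneg q hq) (hGT p hp) (hGT q hq)
        (fun i _ => hpq i) hj.symm)

/-- under the substitutes condition, the constant-bid value `V` is
antitone in the price on the grid `G`. -/
theorem stmt4 {M : ℕ} (m : Fin M → ℕ) (hm : ∀ j, 0 < m j)
    (v : Bundle m → ℝ)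
    (hv0 : v (fun _ => 0) = 0) (hvnn : ∀ δ, 0 ≤ v δ)
    (hvmono : ∀ δ δ' : Bundle m, (∀ j, (δ j : ℕ) ≤ (δ' j : ℕ)) → v δ ≤ v δ')
    (pmin : Fin M → ℝ) (hpmin : ∀ j, 0 ≤ pmin j)
    (ε : Fin M → ℝ) (hε : ∀ j, 0 < ε j)
    (G : Set (Fin M → ℝ))
    (hG : G = {p | ∀ j, ∃ n : ℕ, p j = pmin j + n * ε j})
    (hGT : ∀ p ∈ G, p ∉ indiff v)
    (D : (Fin M → ℝ) → Bundle m)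
    (hD : ∀ p ∈ G, ∀ d, d ≠ D p → payoff v d p < payoff v (D p) p)
    (hsub : ∀ (j : Fin M) (p phat : Fin M → ℝ),
      (∀ i, 0 ≤ p i) → (∀ i, 0 ≤ phat i) →
      p ∉ indiff v → phat ∉ indiff v →
      (∀ i, i ≠ j → p i ≤ phat i) → phat j = p j →
      (D p j : ℕ) ≤ (D phat j : ℕ))
    (w : Bundle m → ℝ)
    (V : Bundle m → (Fin M → ℝ) → ℝ)
    (hVterm : ∀ k p, (∀ j, (k j : ℕ) + (D p j : ℕ) ≤ m j) →
      V k p = w k - ∑ j, (k j : ℝ) * p j)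
    (hVstep : ∀ k p, ¬ (∀ j, (k j : ℕ) + (D p j : ℕ) ≤ m j) →
      V k p = V k (Tup D ε k p)) :
    ∀ (k : Bundle m), ∀ p ∈ G, ∀ phat ∈ G, (∀ j, p j ≤ phat j) →
      V k phat ≤ V k p :=
  stmt4_general m v hv0 pmin hpmin ε hε G hG hGT D hD hsub w V hVterm hVstep
end

section
/- Semilinear sets in ℝ^n (finite unions of sets defined by finitely many weak or strict affine inequalities) are closed under finite unions, finite intersections, and complements; moreover, if S ⊆ ℝ^n is semilinear and c ∈ ℝ^n, then the set { p : ∃ t₁ > 0, p + t·c ∈ S for all t ∈ [0, t₁) } is semilinear. -/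
open Set

/-- A basic polyhedron: solution set of finitely many weak or strict affine
inequalities. -/
def IsBasicPolyhedron {n : ℕ} (S : Set (Fin n → ℝ)) : Prop :=
  ∃ (k : ℕ) (A : Fin k → Fin n → ℝ) (b : Fin k → ℝ) (strict : Fin k → Bool),
    S = {x | ∀ i, if strict i then ∑ j, A i j * x j < b i else ∑ j, A i j * x j ≤ b i}

/-- A semilinear set: a finite union of basic polyhedra. -/
def IsSemilinear {n : ℕ} (S : Set (Fin n → ℝ)) : Prop :=
  ∃ (N : ℕ) (P : Fin N → Set (Fin n → ℝ)),
    (∀ i, IsBasicPolyhedron (P i)) ∧ S = ⋃ i, P i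

open Filter Topology

section Aux

variable {n : ℕ}

lemma bp_univ : IsBasicPolyhedron (univ : Set (Fin n → ℝ)) := by
  refine ⟨0, fun i => i.elim0, fun i => i.elim0, fun i => i.elim0, ?_⟩
  ext x
  constructor
  · intro _ i; exact i.elim0
  · intro _; trivial

lemma bp_single (a : Fin n → ℝ) (bb : ℝ) (st : Bool) :
    IsBasicPolyhedron {x : Fin n → ℝ |
      if st then ∑ j, a j * x j < bb else ∑ j, a j * x j ≤ bb} := by
  refine ⟨1, fun _ => a, fun _ => bb, fun _ => st, ?_⟩
  ext x
  simp [Fin.forall_fin_one]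

lemma bp_inter {S T : Set (Fin n → ℝ)} (hS : IsBasicPolyhedron S)
    (hT : IsBasicPolyhedron T) : IsBasicPolyhedron (S ∩ T) := by
  obtain ⟨k, A, b, s, rfl⟩ := hS
  obtain ⟨l, C, d, t, rfl⟩ := hT
  refine ⟨k + l, Fin.addCases A C, Fin.addCases b d, Fin.addCases s t, ?_⟩
  ext x
  simp only [mem_inter_iff, mem_setOf_eq]
  constructor
  · rintro ⟨h1, h2⟩ i
    refine Fin.addCases (fun i => ?_) (fun i => ?_) i
    · simpa using h1 i
    · simpa using h2 i
  · intro h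
    exact ⟨fun i => by simpa using h (Fin.castAdd l i),
           fun i => by simpa using h (Fin.natAdd k i)⟩

lemma sl_of_bp {S : Set (Fin n → ℝ)} (h : IsBasicPolyhedron S) : IsSemilinear S :=
  ⟨1, fun _ => S, fun _ => h, (Set.iUnion_const S).symm⟩

lemma sl_empty : IsSemilinear (∅ : Set (Fin n → ℝ)) :=
  ⟨0, fun i => i.elim0, fun i => i.elim0, by simp⟩

lemma sl_union {S T : Set (Fin n → ℝ)} (hS : IsSemilinear S) (hT : IsSemilinear T) :
    IsSemilinear (S ∪ T) := by
  obtain ⟨N, P, hP, rfl⟩ := hS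
  obtain ⟨M, Q, hQ, rfl⟩ := hT
  refine ⟨N + M, Fin.addCases P Q, ?_, ?_⟩
  · intro i
    refine Fin.addCases (fun i => ?_) (fun i => ?_) i
    · simpa using hP i
    · simpa using hQ i
  · ext x
    simp only [mem_union, mem_iUnion]
    constructor
    · rintro (⟨i, hi⟩ | ⟨i, hi⟩)
      · exact ⟨Fin.castAdd M i, by simpa using hi⟩
      · exact ⟨Fin.natAdd N i, by simpa using hi⟩
    · rintro ⟨i, hi⟩
      refine Fin.addCases (fun i hi => ?_) (fun i hi => ?_) i hi
      · exact Or.inl ⟨i, by simpa using hi⟩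
      · exact Or.inr ⟨i, by simpa using hi⟩

lemma sl_iUnion : ∀ {N : ℕ} (P : Fin N → Set (Fin n → ℝ)),
    (∀ i, IsSemilinear (P i)) → IsSemilinear (⋃ i, P i) := by
  intro N
  induction N with
  | zero => intro P _; simpa using sl_empty
  | succ N ih =>
    intro P hP
    have : (⋃ i, P i) = (⋃ i : Fin N, P i.castSucc) ∪ P (Fin.last N) := by
      ext x
      simp only [mem_iUnion, mem_union]
      constructor
      · rintro ⟨i, hi⟩
        induction i using Fin.lastCases with
        | last => exact Or.inr hi
        | cast i => exact Or.inl ⟨i, hi⟩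
      · rintro (⟨i, hi⟩ | h)
        · exact ⟨i.castSucc, hi⟩
        · exact ⟨Fin.last N, h⟩
    rw [this]
    exact sl_union (ih _ fun i => hP _) (hP _)

lemma sl_inter {S T : Set (Fin n → ℝ)} (hS : IsSemilinear S) (hT : IsSemilinear T) :
    IsSemilinear (S ∩ T) := by
  obtain ⟨N, P, hP, rfl⟩ := hS
  obtain ⟨M, Q, hQ, rfl⟩ := hT
  have : (⋃ i, P i) ∩ (⋃ j, Q j) = ⋃ i, ⋃ j, P i ∩ Q j := by
    ext x; simp only [mem_inter_iff, mem_iUnion]; tauto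
  rw [this]
  exact sl_iUnion _ fun i => sl_iUnion _ fun j => sl_of_bp (bp_inter (hP i) (hQ j))

lemma bp_compl_sl {S : Set (Fin n → ℝ)} (hS : IsBasicPolyhedron S) :
    IsSemilinear Sᶜ := by
  obtain ⟨k, A, b, s, rfl⟩ := hS
  have : ({x : Fin n → ℝ | ∀ i, if s i then ∑ j, A i j * x j < b i
      else ∑ j, A i j * x j ≤ b i})ᶜ
      = ⋃ i, {x : Fin n → ℝ |
          if !(s i) then ∑ j, (-(A i j)) * x j < -(b i)
          else ∑ j, (-(A i j)) * x j ≤ -(b i)} := by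
    ext x
    simp only [mem_compl_iff, mem_setOf_eq, mem_iUnion, not_forall]
    constructor <;> rintro ⟨i, hi⟩ <;> refine ⟨i, ?_⟩ <;> revert hi <;>
        cases s i <;>
      simp [not_lt, not_le, neg_mul, Finset.sum_neg_distrib, neg_le_neg_iff,
        neg_lt_neg_iff] <;> intro hi <;> linarith
  rw [this]
  exact sl_iUnion _ fun i => sl_of_bp (bp_single _ _ _)

lemma sl_iInter : ∀ {N : ℕ} (P : Fin N → Set (Fin n → ℝ)),
    (∀ i, IsSemilinear (P i)) → IsSemilinear (⋂ i, P i) := by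
  intro N
  induction N with
  | zero => intro P _; simpa using sl_of_bp bp_univ
  | succ N ih =>
    intro P hP
    have : (⋂ i, P i) = (⋂ i : Fin N, P i.castSucc) ∩ P (Fin.last N) := by
      ext x
      simp only [mem_iInter, mem_inter_iff]
      constructor
      · intro h
        exact ⟨fun i => h _, h _⟩
      · rintro ⟨h1, h2⟩ i
        induction i using Fin.lastCases with
        | last => exact h2
        | cast i => exact h1 i
    rw [this]
    exact sl_inter (ih _ fun i => hP _) (hP _)

lemma sl_compl {S : Set (Fin n → ℝ)} (hS : IsSemilinear S) : IsSemilinear Sᶜ := by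
  obtain ⟨N, P, hP, rfl⟩ := hS
  rw [compl_iUnion]
  exact sl_iInter _ fun i => bp_compl_sl (hP i)

/-! ### Germ along a ray -/

lemma ev_Ioo {ε : ℝ} (hε : 0 < ε) {q : ℝ → Prop} (h : ∀ t ∈ Ioo (0:ℝ) ε, q t) :
    ∀ᶠ t in 𝓝[>] (0:ℝ), q t :=
  Filter.eventually_of_mem (Ioo_mem_nhdsGT_of_mem ⟨le_refl 0, hε⟩) h

lemma evgt {α bb β : ℝ} (hb : bb < α) (hβ : β ≤ 0) :
    ∀ᶠ t in 𝓝[>] (0:ℝ), bb < α + t * β := by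
  have h1 : (0:ℝ) < 1 - β := by linarith
  apply ev_Ioo (div_pos (by linarith : (0:ℝ) < α - bb) h1)
  intro t ht
  have h3 : t * (1 - β) < α - bb := (lt_div_iff₀ h1).1 ht.2
  have h4 : 0 < t := ht.1
  nlinarith

lemma key (st : Bool) (α β bb : ℝ) :
    (∀ᶠ t in 𝓝[>] (0:ℝ), if st then α + t * β < bb else α + t * β ≤ bb) ↔
    (if (if st then decide (0 ≤ β) else decide (0 < β)) then α < bb else α ≤ bb) := by
  constructor
  · intro h
    cases st <;> simp only [Bool.false_eq_true, Bool.true_eq_false, if_false, if_true,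
      decide_eq_true_eq] at h ⊢
    · -- weak constraint
      split_ifs with hβ
      · obtain ⟨t, hq, ht⟩ := (h.and eventually_mem_nhdsWithin).exists
        have := mul_pos (show (0:ℝ) < t from ht) hβ
        linarith
      · push_neg at hβ
        by_contra hcon
        push_neg at hcon
        obtain ⟨t, hq, hgt⟩ := (h.and (evgt hcon hβ)).exists
        linarith
    · -- strict constraint
      split_ifs with hβ
      · obtain ⟨t, hq, ht⟩ := (h.and eventually_mem_nhdsWithin).exists
        have := mul_nonneg (le_of_lt (show (0:ℝ) < t from ht)) hβ
        linarith
      · push_neg at hβ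
        by_contra hcon
        push_neg at hcon
        obtain ⟨t, hq, hgt⟩ := (h.and (evgt hcon (le_of_lt hβ))).exists
        linarith
  · intro h
    cases st <;> simp only [Bool.false_eq_true, Bool.true_eq_false, if_false, if_true,
      decide_eq_true_eq] at h ⊢
    · split_ifs at h with hβ
      · apply ev_Ioo (div_pos (by linarith : (0:ℝ) < bb - α) hβ)
        intro t ht
        have h3 : t * β < bb - α := (lt_div_iff₀ hβ).1 ht.2
        linarith
      · push_neg at hβ
        apply ev_Ioo one_pos
        intro t ht
        have := mul_nonpos_of_nonneg_of_nonpos (le_of_lt ht.1) hβ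
        linarith
    · split_ifs at h with hβ
      · apply ev_Ioo (div_pos (by linarith : (0:ℝ) < bb - α) (by linarith : (0:ℝ) < β + 1))
        intro t ht
        have h3 : t * (β + 1) < bb - α := (lt_div_iff₀ (by linarith)).1 ht.2
        nlinarith [ht.1]
      · push_neg at hβ
        apply ev_Ioo one_pos
        intro t ht
        have := mul_neg_of_pos_of_neg ht.1 hβ
        linarith

lemma keyneg (st : Bool) (α β bb : ℝ)
    (h : ¬ (if (if st then decide (0 ≤ β) else decide (0 < β)) then α < bb else α ≤ bb)) :
    ∀ᶠ t in 𝓝[>] (0:ℝ), ¬ (if st then α + t * β < bb else α + t * β ≤ bb) := by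
  cases st <;> simp only [Bool.false_eq_true, Bool.true_eq_false, if_false, if_true,
      decide_eq_true_eq] at h ⊢ <;>
    split_ifs at h with hβ <;> push_neg at h
  · -- weak, 0 < β, bb ≤ α
    filter_upwards [eventually_mem_nhdsWithin] with t ht
    have := mul_pos (show (0:ℝ) < t from ht) hβ
    push_neg
    linarith
  · -- weak, β ≤ 0, bb < α
    push_neg at hβ
    filter_upwards [evgt h hβ] with t ht
    push_neg
    linarith
  · -- strict, 0 ≤ β, bb ≤ α
    filter_upwards [eventually_mem_nhdsWithin] with t ht
    have := mul_nonneg (le_of_lt (show (0:ℝ) < t from ht)) hβ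
    push_neg
    linarith
  · -- strict, β < 0, bb < α
    push_neg at hβ
    filter_upwards [evgt h (le_of_lt hβ)] with t ht
    push_neg
    linarith

/-- The "positive germ" of a basic polyhedron along direction `c`. -/
def germPoly {n k : ℕ} (A : Fin k → Fin n → ℝ) (b : Fin k → ℝ) (s : Fin k → Bool)
    (c : Fin n → ℝ) : Set (Fin n → ℝ) :=
  {p | ∀ m, if (if s m then decide (0 ≤ ∑ j, A m j * c j)
                else decide (0 < ∑ j, A m j * c j))
        then ∑ j, A m j * p j < b m else ∑ j, A m j * p j ≤ b m}

lemma germPoly_bp {n k : ℕ} (A : Fin k → Fin n → ℝ) (b : Fin k → ℝ) (s : Fin k → Bool)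
    (c : Fin n → ℝ) : IsBasicPolyhedron (germPoly A b s c) :=
  ⟨k, A, b, _, rfl⟩

lemma sum_ray {n k : ℕ} (A : Fin k → Fin n → ℝ) (c p : Fin n → ℝ) (t : ℝ) (m : Fin k) :
    ∑ j, A m j * (p + t • c) j
      = (∑ j, A m j * p j) + t * ∑ j, A m j * c j := by
  simp only [Pi.add_apply, Pi.smul_apply, smul_eq_mul, mul_add, Finset.sum_add_distrib,
    Finset.mul_sum, mul_left_comm]

lemma germPoly_iff {n k : ℕ} (A : Fin k → Fin n → ℝ) (b : Fin k → ℝ) (s : Fin k → Bool)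
    (c p : Fin n → ℝ) :
    (∀ᶠ t in 𝓝[>] (0:ℝ), (p + t • c) ∈ {x : Fin n → ℝ |
        ∀ m, if s m then ∑ j, A m j * x j < b m else ∑ j, A m j * x j ≤ b m}) ↔
      p ∈ germPoly A b s c := by
  have hmem : ∀ t : ℝ, ((p + t • c) ∈ {x : Fin n → ℝ |
      ∀ m, if s m then ∑ j, A m j * x j < b m else ∑ j, A m j * x j ≤ b m}) ↔
      ∀ m, if s m then (∑ j, A m j * p j) + t * (∑ j, A m j * c j) < b m
        else (∑ j, A m j * p j) + t * (∑ j, A m j * c j) ≤ b m := by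
    intro t
    simp only [mem_setOf_eq, sum_ray]
  rw [eventually_congr (Filter.Eventually.of_forall hmem), Filter.eventually_all]
  exact forall_congr' fun m => key (s m) _ _ _

lemma germPoly_not {n k : ℕ} (A : Fin k → Fin n → ℝ) (b : Fin k → ℝ) (s : Fin k → Bool)
    (c p : Fin n → ℝ) (h : p ∉ germPoly A b s c) :
    ∀ᶠ t in 𝓝[>] (0:ℝ), (p + t • c) ∉ {x : Fin n → ℝ |
        ∀ m, if s m then ∑ j, A m j * x j < b m else ∑ j, A m j * x j ≤ b m} := by
  have h' : ∃ m, ¬ (if (if s m then decide (0 ≤ ∑ j, A m j * c j)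
      else decide (0 < ∑ j, A m j * c j))
      then ∑ j, A m j * p j < b m else ∑ j, A m j * p j ≤ b m) := by
    by_contra hc
    push_neg at hc
    exact h fun m => hc m
  obtain ⟨m, hm⟩ := h'
  filter_upwards [keyneg (s m) _ _ _ hm] with t ht hmem
  have := hmem m
  rw [sum_ray] at this
  exact ht this

lemma sl_germ {n : ℕ} (S : Set (Fin n → ℝ)) (c : Fin n → ℝ) (hS : IsSemilinear S) :
    IsSemilinear {p | ∃ t₁ > (0:ℝ), ∀ t ∈ Set.Ico (0:ℝ) t₁, p + t • c ∈ S} := by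
  obtain ⟨N, P, hP0, rfl⟩ := hS
  choose k A b s hP using hP0
  have hmain : {p | ∃ t₁ > (0:ℝ), ∀ t ∈ Set.Ico (0:ℝ) t₁, p + t • c ∈ ⋃ i, P i}
      = (⋃ i, P i) ∩ ⋃ i, germPoly (A i) (b i) (s i) c := by
    ext p
    simp only [mem_setOf_eq, mem_inter_iff, mem_iUnion]
    constructor
    · rintro ⟨t₁, ht₁, h⟩
      constructor
      · have h0 := h 0 ⟨le_refl 0, ht₁⟩
        rw [zero_smul, add_zero] at h0
        exact h0
      · by_contra hc
        push_neg at hc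
        have hev : ∀ᶠ t in 𝓝[>] (0:ℝ), ∀ i, p + t • c ∉ P i := by
          rw [Filter.eventually_all]
          intro i
          have := germPoly_not (A i) (b i) (s i) c p (hc i)
          rw [← hP i] at this
          exact this
        have hin : ∀ᶠ t in 𝓝[>] (0:ℝ), ∃ i, p + t • c ∈ P i := by
          apply ev_Ioo ht₁
          intro t ht
          exact h t ⟨le_of_lt ht.1, ht.2⟩
        obtain ⟨t, ⟨i, hi⟩, htn⟩ := (hin.and hev).exists
        exact htn i hi
    · rintro ⟨hpS, i, hGi⟩
      have hev : ∀ᶠ t in 𝓝[>] (0:ℝ), p + t • c ∈ P i := by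
        rw [hP i]
        exact (germPoly_iff (A i) (b i) (s i) c p).mpr hGi
      obtain ⟨u, hu, hsub⟩ := mem_nhdsGT_iff_exists_Ioo_subset.mp hev
      refine ⟨u, hu, ?_⟩
      intro t ht
      rcases eq_or_lt_of_le ht.1 with h0 | h0
      · rw [← h0, zero_smul, add_zero]
        exact hpS
      · exact ⟨i, hsub ⟨h0, ht.2⟩⟩
  rw [hmain]
  exact sl_inter ⟨N, P, fun i => ⟨k i, A i, b i, s i, hP i⟩, rfl⟩
    (sl_iUnion _ fun i => sl_of_bp (germPoly_bp _ _ _ _))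

end Aux

/-- semilinear sets are closed under finite unions, finite intersections
and complements, and under the "germ along a ray" operation
`S ↦ {p | ∃ t₁ > 0, ∀ t ∈ [0, t₁), p + t·c ∈ S}`. -/
theorem stmt15 (n : ℕ) :
    (∀ S T : Set (Fin n → ℝ), IsSemilinear S → IsSemilinear T → IsSemilinear (S ∪ T)) ∧
    (∀ S T : Set (Fin n → ℝ), IsSemilinear S → IsSemilinear T → IsSemilinear (S ∩ T)) ∧
    (∀ S : Set (Fin n → ℝ), IsSemilinear S → IsSemilinear Sᶜ) ∧
    (∀ (S : Set (Fin n → ℝ)) (c : Fin n → ℝ), IsSemilinear S →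
      IsSemilinear {p | ∃ t₁ > (0:ℝ), ∀ t ∈ Set.Ico (0:ℝ) t₁, p + t • c ∈ S}) := by
  exact ⟨fun S T hS hT => sl_union hS hT, fun S T hS hT => sl_inter hS hT,
    fun S hS => sl_compl hS, fun S c hS => sl_germ S c hS⟩
end
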